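/- arXiv:1006.0524 — 3 statements merged into one kernel-verified Lean document; each statement's English description precedes it below -/
import Mathlib

section
/- Let f be (the holomorphic extension of) a complete Bernstein function and let ε ∈ (0, π). Then for every complex z with |Arg z| ≤ π − ε, one has |f(z)| ≤ (sin(ε/2))⁻¹ f(|z|). -/
/-!
On the ray `z + [0, ∞)` the law of cosines gives `|z + s| ≥ sin(ε/2) (|z| + s)` whenever
`|Arg z| ≤ π - ε`. Hence the kernel `z / (z + s)` is dominated by `sin(ε/2)⁻¹ |z| / (|z| + s)`,
and integrating against `m₀` bounds the integral term of `f z` by `sin(ε/2)⁻¹` times that of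
`f |z|`, which is real and nonnegative; the affine part only gains from the factor `sin(ε/2)⁻¹ ≥ 1`.
-/

open MeasureTheory Set Complex

lemma Complex.neg_norm_mul_cos_le_re {z : ℂ} {ε : ℝ} (hε : 0 ≤ ε)
    (harg : |arg z| ≤ Real.pi - ε) : -(‖z‖ * Real.cos ε) ≤ z.re := by
  have hcos : Real.cos (Real.pi - ε) ≤ Real.cos (arg z) := by
    rw [← Real.cos_abs (arg z)]
    exact Real.cos_le_cos_of_nonneg_of_le_pi (abs_nonneg _) (by linarith) harg
  rw [Real.cos_pi_sub] at hcos
  rw [← norm_mul_cos_arg z]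
  nlinarith [norm_nonneg z]

lemma Complex.sin_half_mul_add_le_norm_add_ofReal {z : ℂ} {ε s : ℝ} (hε : 0 ≤ ε)
    (harg : |arg z| ≤ Real.pi - ε) (hs : 0 ≤ s) :
    Real.sin (ε / 2) * (‖z‖ + s) ≤ ‖z + s‖ := by
  have hcos : Real.cos ε = 1 - 2 * Real.sin (ε / 2) ^ 2 := by
    have h := Real.cos_two_mul' (ε / 2)
    rw [mul_div_cancel₀ ε two_ne_zero, Real.cos_sq'] at h
    linarith
  set σ := Real.sin (ε / 2)
  have hre := neg_norm_mul_cos_le_re hε harg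
  have hnorm_sq : ‖z + s‖ ^ 2 = ‖z‖ ^ 2 + s ^ 2 + 2 * s * z.re := by
    rw [Complex.sq_norm, Complex.sq_norm, normSq_apply, normSq_apply]
    simp only [add_re, ofReal_re, add_im, ofReal_im, add_zero]
    ring
  -- `‖z + s‖² - σ² (‖z‖ + s)² ≥ (1 - σ²) (‖z‖ - s)²` by the law of cosines
  have hsq : (σ * (‖z‖ + s)) ^ 2 ≤ ‖z + s‖ ^ 2 := by
    rw [hcos] at hre
    nlinarith [mul_nonneg (sub_nonneg.2 (Real.sin_sq_le_one (ε / 2))) (sq_nonneg (‖z‖ - s)),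
      mul_le_mul_of_nonneg_left hre hs]
  exact (le_abs_self _).trans (abs_le_of_sq_le_sq hsq (norm_nonneg _))

lemma div_add_mul_inv_le_max_mul_min {r s : ℝ} (hr : 0 ≤ r) (hs : 0 < s) :
    r / (r + s) * s⁻¹ ≤ max 1 r * min s⁻¹ (s ^ 2)⁻¹ := by
  rcases le_total s⁻¹ (s ^ 2)⁻¹ with h | h
  · rw [min_eq_left h]
    gcongr
    exact ((div_le_one (by linarith)).2 (by linarith)).trans (le_max_left _ _)
  · rw [min_eq_right h]
    calc r / (r + s) * s⁻¹ ≤ r / s * s⁻¹ := by gcongr; linarith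
      _ = r * (s ^ 2)⁻¹ := by rw [sq, mul_inv, div_eq_mul_inv, mul_assoc]
      _ ≤ max 1 r * (s ^ 2)⁻¹ := by gcongr; exact le_max_right _ _

section Kernel

variable {m₀ : Measure ℝ}

lemma integrable_div_add_mul_inv (hsupp : ∀ᵐ s ∂m₀, 0 < s)
    (hint : ∫⁻ s, ENNReal.ofReal (min s⁻¹ (s ^ 2)⁻¹) ∂m₀ < ⊤) {r : ℝ} (hr : 0 ≤ r) :
    Integrable (fun s ↦ r / (r + s) * s⁻¹) m₀ := by
  have hmin : Integrable (fun s : ℝ ↦ min s⁻¹ (s ^ 2)⁻¹) m₀ := by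
    refine ⟨(measurable_inv.min (measurable_id.pow_const 2).inv).aestronglyMeasurable, ?_⟩
    rw [hasFiniteIntegral_iff_ofReal]
    · exact hint
    · filter_upwards [hsupp] with s hs
      exact le_min (inv_nonneg.2 hs.le) (by positivity)
  refine (hmin.const_mul (max 1 r)).mono'
    ((measurable_const.div (measurable_const.add measurable_id)).mul
      measurable_inv).aestronglyMeasurable ?_
  filter_upwards [hsupp] with s hs
  rw [Real.norm_of_nonneg (by positivity)]
  exact div_add_mul_inv_le_max_mul_min hr hs

lemma integral_ofReal_div_add_mul_inv (r : ℝ) :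
    ∫ s, (r : ℂ) / (r + s) * (s : ℂ)⁻¹ ∂m₀ = ((∫ s, r / (r + s) * s⁻¹ ∂m₀ : ℝ) : ℂ) := by
  rw [← integral_complex_ofReal]
  push_cast
  rfl

lemma norm_integral_div_add_mul_inv_le (hsupp : ∀ᵐ s ∂m₀, 0 < s)
    (hint : ∫⁻ s, ENNReal.ofReal (min s⁻¹ (s ^ 2)⁻¹) ∂m₀ < ⊤) {z : ℂ} {ε : ℝ}
    (hε : ε ∈ Ioo 0 Real.pi) (harg : |arg z| ≤ Real.pi - ε) :
    ‖∫ s, z / (z + s) * (s : ℂ)⁻¹ ∂m₀‖ ≤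
      (Real.sin (ε / 2))⁻¹ * ∫ s, ‖z‖ / (‖z‖ + s) * s⁻¹ ∂m₀ := by
  have hσ : 0 < Real.sin (ε / 2) :=
    Real.sin_pos_of_pos_of_lt_pi (by linarith [hε.1]) (by linarith [hε.2, Real.pi_pos])
  rw [← integral_const_mul]
  refine norm_integral_le_of_norm_le
    ((integrable_div_add_mul_inv hsupp hint (norm_nonneg z)).const_mul _) ?_
  filter_upwards [hsupp] with s hs
  have hkey := sin_half_mul_add_le_norm_add_ofReal hε.1.le harg hs.le
  have hpos : 0 < Real.sin (ε / 2) * (‖z‖ + s) := by positivity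
  rw [norm_mul, norm_div, norm_inv, norm_real, Real.norm_of_nonneg hs.le, ← mul_assoc]
  gcongr
  calc ‖z‖ / ‖z + s‖ ≤ ‖z‖ / (Real.sin (ε / 2) * (‖z‖ + s)) := by gcongr
    _ = (Real.sin (ε / 2))⁻¹ * (‖z‖ / (‖z‖ + s)) := by field_simp

end Kernel

/-- If `f` is (the holomorphic extension of) a complete Bernstein function and
`ε ∈ (0, π)`, then `|f(z)| ≤ (sin(ε/2))⁻¹ f(|z|)` for all `z` with `|Arg z| ≤ π - ε`. -/
theorem cbf_sector_bound (f : ℂ → ℂ) (c₁ c₂ : ℝ) (hc₁ : 0 ≤ c₁) (hc₂ : 0 ≤ c₂)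
    (m₀ : Measure ℝ) (hsupp : ∀ᵐ s ∂m₀, 0 < s)
    (hint : ∫⁻ s, ENNReal.ofReal (min s⁻¹ (s ^ 2)⁻¹) ∂m₀ < ⊤)
    (hrep : ∀ z : ℂ, (z.im ≠ 0 ∨ 0 < z.re) →
      f z = (c₁ : ℂ) + (c₂ : ℂ) * z + (1 / (Real.pi : ℂ)) * ∫ s, (z / (z + (s : ℂ))) * (s : ℂ)⁻¹ ∂m₀)
    (ε : ℝ) (hε : ε ∈ Set.Ioo 0 Real.pi) :
    ∀ z : ℂ, z ≠ 0 → |Complex.arg z| ≤ Real.pi - ε →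
      ‖f z‖ ≤ (Real.sin (ε / 2))⁻¹ * ‖f ((‖z‖ : ℝ) : ℂ)‖ := by
  intro z hz harg
  set σ := Real.sin (ε / 2)
  set I := ∫ s, ‖z‖ / (‖z‖ + s) * s⁻¹ ∂m₀
  have hσ : 0 < σ := Real.sin_pos_of_pos_of_lt_pi (by linarith [hε.1]) (by linarith [hε.2, Real.pi_pos])
  have hσ_inv : 1 ≤ σ⁻¹ := (one_le_inv₀ hσ).2 (Real.sin_le_one _)
  have hI : 0 ≤ I := integral_nonneg_of_ae <| by
    filter_upwards [hsupp] with s hs using by positivity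
  have hz_slit : z.im ≠ 0 ∨ 0 < z.re := by
    refine (mem_slitPlane_iff.1 (mem_slitPlane_iff_arg.2 ⟨fun h ↦ ?_, hz⟩)).symm
    rw [h, abs_of_pos Real.pi_pos] at harg
    linarith [hε.1]
  have hf_norm : f ‖z‖ = ((c₁ + c₂ * ‖z‖ + Real.pi⁻¹ * I : ℝ) : ℂ) := by
    rw [hrep _ (Or.inr (by simpa using hz)), integral_ofReal_div_add_mul_inv]
    push_cast
    ring
  have hf_z : ‖f z‖ ≤ c₁ + c₂ * ‖z‖ + Real.pi⁻¹ * (σ⁻¹ * I) := by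
    rw [hrep z hz_slit]
    refine norm_add₃_le.trans ?_
    rw [norm_mul, norm_mul, norm_div, norm_one, norm_real, norm_real, norm_real,
      Real.norm_of_nonneg hc₁, Real.norm_of_nonneg hc₂, Real.norm_of_nonneg Real.pi_pos.le, one_div]
    gcongr
    exact norm_integral_div_add_mul_inv_le hsupp hint hε harg
  rw [hf_norm, norm_real, Real.norm_of_nonneg (by positivity)]
  nlinarith [mul_le_mul_of_nonneg_right hσ_inv (by positivity : 0 ≤ c₁ + c₂ * ‖z‖)]
end

section
/- Let f be the holomorphic extension of a complete Bernstein function and a > 0. Define f*(z) = (1/(2ia))·(f(ia)/(z − ia) − f(−ia)/(z + ia)). Then g(z) = f*(z) − f(z)/(z² + a²) is a Stieltjes function; explicitly, g(z) = (1/π)∫₀^∞ (1/(z+s)) · m₀(ds)/(a² + s²), where m₀ is the representing measure of f. -/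
open MeasureTheory

/-! The map `F ↦ (F(ia)/(z-ia) - F(-ia)/(z+ia))/(2ia) - F(z)/(z²+a²)` is a linear combination
of three point evaluations of `F` that vanishes on affine functions. Applied to the representation
`f(u) = c₁ + c₂u + π⁻¹ ∫ u/((u+s)s) m₀(ds)` it therefore passes under the integral (off the cut the
kernel is bounded by `C_u min(1/s, 1/s²)`, hence integrable), and on the kernel `u ↦ u/((u+s)s)`
partial fractions give `1/((z+s)(a²+s²))`. -/

namespace Complex

lemma add_ofReal_mem_slitPlane {z : ℂ} (hz : z ∈ slitPlane) {s : ℝ} (hs : 0 ≤ s) :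
    z + s ∈ slitPlane := by
  rw [mem_slitPlane_iff] at hz ⊢
  simp only [add_re, ofReal_re, add_im, ofReal_im, add_zero]
  rcases hz with hre | him
  · exact Or.inl (by linarith)
  · exact Or.inr him

lemma add_ofReal_ne_zero {z : ℂ} (hz : z ∈ slitPlane) {s : ℝ} (hs : 0 ≤ s) : z + s ≠ 0 :=
  slitPlane_ne_zero (add_ofReal_mem_slitPlane hz hs)

lemma exists_pos_le_norm_add_ofReal {z : ℂ} (hz : z ∈ slitPlane) :
    ∃ ε > 0, ∀ s : ℝ, 0 ≤ s → ε ≤ ‖z + s‖ := by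
  rcases mem_slitPlane_iff.1 hz with hre | him
  · refine ⟨z.re, hre, fun s hs => ?_⟩
    calc z.re ≤ (z + s).re := by simp [hs]
      _ ≤ ‖z + s‖ := re_le_norm _
  · refine ⟨|z.im|, abs_pos.2 him, fun s _ => ?_⟩
    calc |z.im| = |(z + s).im| := by simp
      _ ≤ ‖z + s‖ := abs_im_le_norm _

lemma exists_pos_mul_one_add_le_norm_add_ofReal {z : ℂ} (hz : z ∈ slitPlane) :
    ∃ δ > 0, ∀ s : ℝ, 0 ≤ s → δ * (1 + s) ≤ ‖z + s‖ := by
  obtain ⟨ε, hε, hlow⟩ := exists_pos_le_norm_add_ofReal hz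
  refine ⟨ε / (1 + ε + ‖z‖), by positivity, fun s hs => ?_⟩
  have hfar : s - ‖z‖ ≤ ‖z + s‖ := by
    have := norm_sub_le (z + s) z
    rw [add_sub_cancel_left, norm_real, Real.norm_of_nonneg hs] at this
    linarith
  have hnear := hlow s hs
  rw [div_mul_eq_mul_div, div_le_iff₀ (by positivity)]
  rcases le_total s (ε + ‖z‖) with hs' | hs' <;> nlinarith [norm_nonneg z]

end Complex

lemma integrable_cbf_kernel {m₀ : Measure ℝ} (hsupp : ∀ᵐ s ∂m₀, 0 < s)
    (hint : Integrable (fun s : ℝ => min s⁻¹ (s ^ 2)⁻¹) m₀) {z : ℂ} (hz : z ∈ Complex.slitPlane) :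
    Integrable (fun s : ℝ => z / (z + s) * (s : ℂ)⁻¹) m₀ := by
  obtain ⟨δ, hδ, hle⟩ := Complex.exists_pos_mul_one_add_le_norm_add_ofReal hz
  refine (hint.const_mul (‖z‖ / δ)).mono' (by fun_prop) ?_
  filter_upwards [hsupp] with s hs
  calc ‖z / (z + s) * (s : ℂ)⁻¹‖ = ‖z‖ / ‖z + s‖ * s⁻¹ := by
        simp [hs.le]
    _ ≤ ‖z‖ / (δ * (1 + s)) * s⁻¹ := by gcongr; exact hle s hs.le
    _ = ‖z‖ / δ * ((1 + s) * s)⁻¹ := by field_simp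
    _ ≤ ‖z‖ / δ * min s⁻¹ (s ^ 2)⁻¹ := by
        gcongr
        refine le_min ?_ ?_ <;> gcongr <;> nlinarith

section StarDefect

variable {𝕜 : Type*} [Field 𝕜]

/-- For `w = ia` this is the paper's `g(z) = f*(z) - f(z)/(z² + a²)`. -/
def starDefect (F : 𝕜 → 𝕜) (w z : 𝕜) : 𝕜 :=
  (2 * w)⁻¹ * (F w / (z - w) - F (-w) / (z + w)) - F z / (z ^ 2 - w ^ 2)

variable {w z : 𝕜}

lemma starDefect_add (F G : 𝕜 → 𝕜) :
    starDefect (fun u => F u + G u) w z = starDefect F w z + starDefect G w z := by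
  simp only [starDefect]; ring

lemma starDefect_const_mul (c : 𝕜) (F : 𝕜 → 𝕜) :
    starDefect (fun u => c * F u) w z = c * starDefect F w z := by
  simp only [starDefect]; ring

lemma starDefect_affine [NeZero (2 : 𝕜)] (hw : w ≠ 0) (hzw : z - w ≠ 0) (hzw' : z + w ≠ 0)
    (c₁ c₂ : 𝕜) : starDefect (fun u => c₁ + c₂ * u) w z = 0 := by
  have : z ^ 2 - w ^ 2 ≠ 0 := by rw [sq_sub_sq]; exact mul_ne_zero hzw' hzw
  simp only [starDefect]
  field_simp
  ring

lemma starDefect_cbf_kernel [NeZero (2 : 𝕜)] {s : 𝕜} (hw : w ≠ 0) (hs : s ≠ 0)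
    (hzw : z - w ≠ 0) (hzw' : z + w ≠ 0) (hzs : z + s ≠ 0) (hws : w + s ≠ 0) (hws' : -w + s ≠ 0) :
    starDefect (fun u => u / (u + s) * s⁻¹) w z = 1 / (z + s) * (s ^ 2 - w ^ 2)⁻¹ := by
  have : z ^ 2 - w ^ 2 ≠ 0 := by rw [sq_sub_sq]; exact mul_ne_zero hzw' hzw
  have : s ^ 2 - w ^ 2 ≠ 0 := by
    rw [sq_sub_sq]; exact mul_ne_zero (by rwa [add_comm]) (by rwa [sub_eq_neg_add])
  simp only [starDefect]
  field_simp
  ring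

end StarDefect

lemma starDefect_integral {𝕜 α : Type*} [RCLike 𝕜] [MeasurableSpace α] {μ : Measure α}
    {g : 𝕜 → α → 𝕜} {w z : 𝕜} (hw : Integrable (g w) μ) (hw' : Integrable (g (-w)) μ)
    (hz : Integrable (g z) μ) :
    starDefect (fun u => ∫ x, g u x ∂μ) w z = ∫ x, starDefect (fun u => g u x) w z ∂μ := by
  simp only [starDefect]
  rw [integral_sub, integral_const_mul, integral_sub, integral_div, integral_div, integral_div]
  exacts [hw.div_const _, hw'.div_const _,
    ((hw.div_const _).sub (hw'.div_const _)).const_mul _, hz.div_const _]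

theorem cbf_fstar_stieltjes_general (f : ℂ → ℂ) (c₁ c₂ : ℝ)
    (m₀ : Measure ℝ) (hsupp : ∀ᵐ s ∂m₀, 0 < s)
    (hint : ∫⁻ s, ENNReal.ofReal (min s⁻¹ (s ^ 2)⁻¹) ∂m₀ < ⊤)
    (hrep : ∀ z : ℂ, (z.im ≠ 0 ∨ 0 < z.re) →
      f z = (c₁ : ℂ) + (c₂ : ℂ) * z + (1 / (Real.pi : ℂ)) * ∫ s, (z / (z + (s : ℂ))) * (s : ℂ)⁻¹ ∂m₀)
    (a : ℝ) (ha : 0 < a) :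
    ∀ z : ℂ, (z.im ≠ 0 ∨ 0 < z.re) →
      z ≠ Complex.I * (a : ℂ) → z ≠ -(Complex.I * (a : ℂ)) →
      (1 / (2 * Complex.I * (a : ℂ))) *
          (f (Complex.I * (a : ℂ)) / (z - Complex.I * (a : ℂ))
            - f (-(Complex.I * (a : ℂ))) / (z + Complex.I * (a : ℂ)))
        - f z / (z ^ 2 + (a : ℂ) ^ 2)
      = (1 / (Real.pi : ℂ)) * ∫ s, (1 / (z + (s : ℂ))) * ((a ^ 2 + s ^ 2 : ℝ) : ℂ)⁻¹ ∂m₀ := by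
  intro z hz hz_ne hz_ne'
  set w := Complex.I * a
  have hw_sq : w ^ 2 = -(a : ℂ) ^ 2 := by simp [w, mul_pow]
  have hw_im : w.im ≠ 0 := by simp [w, ha.ne']
  have hw'_im : (-w).im ≠ 0 := by simpa using hw_im
  have hw : w ∈ Complex.slitPlane := Complex.mem_slitPlane_iff.2 (Or.inr hw_im)
  have hw' : -w ∈ Complex.slitPlane := Complex.mem_slitPlane_iff.2 (Or.inr hw'_im)
  have hz' : z ∈ Complex.slitPlane := Complex.mem_slitPlane_iff.2 hz.symm
  have hw0 : w ≠ 0 := Complex.slitPlane_ne_zero hw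
  have hzw : z - w ≠ 0 := sub_ne_zero.2 hz_ne
  have hzw' : z + w ≠ 0 := fun h => hz_ne' (eq_neg_of_add_eq_zero_left h)
  have hint' : Integrable (fun s : ℝ => min s⁻¹ (s ^ 2)⁻¹) m₀ := by
    refine ⟨by fun_prop, (hasFiniteIntegral_iff_ofReal ?_).2 hint⟩
    filter_upwards [hsupp] with s hs using by positivity
  calc _ = starDefect f w z := by
        rw [starDefect, hw_sq, sub_neg_eq_add, one_div, mul_assoc]
    _ = starDefect (fun u => (c₁ + c₂ * u) + 1 / Real.pi * ∫ s : ℝ, u / (u + s) * (s : ℂ)⁻¹ ∂m₀)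
          w z := by
        simp only [starDefect, hrep w (Or.inl hw_im), hrep (-w) (Or.inl hw'_im), hrep z hz]
    _ = 1 / Real.pi * ∫ s : ℝ, starDefect (fun u => u / (u + s) * (s : ℂ)⁻¹) w z ∂m₀ := by
        rw [starDefect_add, starDefect_affine hw0 hzw hzw', zero_add, starDefect_const_mul,
          starDefect_integral (integrable_cbf_kernel hsupp hint' hw)
            (integrable_cbf_kernel hsupp hint' hw') (integrable_cbf_kernel hsupp hint' hz')]
    _ = _ := by
        congr 1
        refine integral_congr_ae ?_
        filter_upwards [hsupp] with s hs
        rw [starDefect_cbf_kernel hw0 (by exact_mod_cast hs.ne') hzw hzw'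
          (Complex.add_ofReal_ne_zero hz' hs.le) (Complex.add_ofReal_ne_zero hw hs.le)
          (Complex.add_ofReal_ne_zero hw' hs.le), hw_sq]
        push_cast
        ring

/-- Let `f` be the holomorphic extension of a complete Bernstein function with
representing measure `m₀`, and `a > 0`. With
`f*(z) = (1/(2ia)) (f(ia)/(z - ia) - f(-ia)/(z + ia))`, the function
`g(z) = f*(z) - f(z)/(z² + a²)` is a Stieltjes function; explicitly
`g(z) = (1/π) ∫₀^∞ (1/(z+s)) m₀(ds)/(a² + s²)`. -/
theorem cbf_fstar_stieltjes (f : ℂ → ℂ) (c₁ c₂ : ℝ) (hc₁ : 0 ≤ c₁) (hc₂ : 0 ≤ c₂)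
    (m₀ : Measure ℝ) (hsupp : ∀ᵐ s ∂m₀, 0 < s)
    (hint : ∫⁻ s, ENNReal.ofReal (min s⁻¹ (s ^ 2)⁻¹) ∂m₀ < ⊤)
    (hrep : ∀ z : ℂ, (z.im ≠ 0 ∨ 0 < z.re) →
      f z = (c₁ : ℂ) + (c₂ : ℂ) * z + (1 / (Real.pi : ℂ)) * ∫ s, (z / (z + (s : ℂ))) * (s : ℂ)⁻¹ ∂m₀)
    (a : ℝ) (ha : 0 < a) :
    ∀ z : ℂ, (z.im ≠ 0 ∨ 0 < z.re) →
      z ≠ Complex.I * (a : ℂ) → z ≠ -(Complex.I * (a : ℂ)) →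
      (1 / (2 * Complex.I * (a : ℂ))) *
          (f (Complex.I * (a : ℂ)) / (z - Complex.I * (a : ℂ))
            - f (-(Complex.I * (a : ℂ))) / (z + Complex.I * (a : ℂ)))
        - f z / (z ^ 2 + (a : ℂ) ^ 2)
      = (1 / (Real.pi : ℂ)) * ∫ s, (1 / (z + (s : ℂ))) * ((a ^ 2 + s ^ 2 : ℝ) : ℂ)⁻¹ ∂m₀ :=
  cbf_fstar_stieltjes_general f c₁ c₂ m₀ hsupp hint hrep a ha
end

section
/- For ψ(ξ) = ξ^{α/2} with α ∈ (0,2), the phase shift ϑ_λ = (1/π)∫₀¹ (1/(1−z²)) log[ψ_λ(λ²/z²)/ψ_λ(λ²z²)] dz equals (2−α)π/8 for every λ > 0, where ψ_λ(ξ) = (1−ξ/λ²)/(1−ψ(ξ)/ψ(λ²)). -/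
/-!
The symbol `ψ_λ` is scale invariant: `ψ_λ(λ² w) = (1 - w) / (1 - w^{α/2})`. Hence
`ψ_λ(λ²/z²) / ψ_λ(λ² z²) = z^α / z²` and the integrand is `(2 - α) (-log z) / (1 - z²)`.
Expanding `1 / (1 - z²)` as a geometric series and integrating termwise with
`∫₀¹ z^{2n} (-log z) dz = 1 / (2n + 1)²` leaves `∑ 1 / (2n + 1)² = π² / 8`.
-/

open MeasureTheory Set Real

noncomputable def psiLam (α lam ξ : ℝ) : ℝ :=
  (1 - ξ / lam ^ 2) / (1 - ξ ^ (α / 2) / (lam ^ 2) ^ (α / 2))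

theorem psiLam_sq_mul {α lam : ℝ} (hlam : lam ≠ 0) {w : ℝ} (hw : 0 ≤ w) :
    psiLam α lam (lam ^ 2 * w) = (1 - w) / (1 - w ^ (α / 2)) := by
  have hL : 0 < lam ^ 2 := by positivity
  have hP : (lam ^ 2) ^ (α / 2) ≠ 0 := (rpow_pos_of_pos hL _).ne'
  rw [psiLam, mul_rpow hL.le hw, mul_div_cancel_left₀ _ hL.ne', mul_div_cancel_left₀ _ hP]

theorem one_sub_inv_div_one_sub_inv_div {K : Type*} [Field K] {w a : K} (hw : w ≠ 0) (ha : a ≠ 0)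
    (hw1 : w ≠ 1) (ha1 : a ≠ 1) :
    (1 - w⁻¹) / (1 - a⁻¹) / ((1 - w) / (1 - a)) = a / w := by
  have hw1' : 1 - w ≠ 0 := sub_ne_zero.2 hw1.symm
  have ha1' : 1 - a ≠ 0 := sub_ne_zero.2 ha1.symm
  field_simp
  ring

theorem psiLam_div_psiLam {α lam z : ℝ} (hα : 0 < α) (hlam : lam ≠ 0) (hz : z ∈ Ioo 0 1) :
    psiLam α lam (lam ^ 2 / z ^ 2) / psiLam α lam (lam ^ 2 * z ^ 2) = z ^ α / z ^ 2 := by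
  obtain ⟨hz0, hz1⟩ := hz
  have hsq : (z ^ 2) ^ (α / 2) = z ^ α := by
    rw [← rpow_natCast, ← rpow_mul hz0.le]
    ring_nf
  rw [div_eq_mul_inv (lam ^ 2), psiLam_sq_mul hlam (by positivity),
    psiLam_sq_mul hlam (by positivity), inv_rpow (by positivity), hsq]
  exact one_sub_inv_div_one_sub_inv_div (by positivity) (rpow_pos_of_pos hz0 _).ne'
    (pow_lt_one₀ hz0.le hz1 two_ne_zero).ne (rpow_lt_one hz0.le hz1 hα).ne

theorem log_psiLam_div_psiLam {α lam z : ℝ} (hα : 0 < α) (hlam : lam ≠ 0) (hz : z ∈ Ioo 0 1) :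
    log (psiLam α lam (lam ^ 2 / z ^ 2) / psiLam α lam (lam ^ 2 * z ^ 2)) = (2 - α) * -log z := by
  have hz0 := hz.1
  rw [psiLam_div_psiLam hα hlam hz, log_div (rpow_pos_of_pos hz0 _).ne' (by positivity),
    log_rpow hz0, log_pow]
  push_cast
  ring

theorem continuous_pow_succ_mul_log (k : ℕ) : Continuous fun x : ℝ => x ^ (k + 1) * log x := by
  simp_rw [pow_succ, mul_assoc]
  exact (continuous_pow k).mul continuous_mul_log

theorem continuous_pow_mul_neg_log_primitive (k : ℕ) :
    Continuous fun x => x ^ (k + 1) / ((k : ℝ) + 1) ^ 2 - x ^ (k + 1) * log x / ((k : ℝ) + 1) :=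
  ((continuous_pow _).div_const _).sub ((continuous_pow_succ_mul_log k).div_const _)

theorem hasDerivAt_pow_mul_neg_log_primitive (k : ℕ) {x : ℝ} (hx : x ≠ 0) :
    HasDerivAt (fun x => x ^ (k + 1) / ((k : ℝ) + 1) ^ 2 - x ^ (k + 1) * log x / ((k : ℝ) + 1))
      (x ^ k * -log x) x := by
  have h := ((hasDerivAt_pow (k + 1) x).div_const (((k : ℝ) + 1) ^ 2)).sub
    (((hasDerivAt_pow (k + 1) x).mul (hasDerivAt_log hx)).div_const ((k : ℝ) + 1))
  refine h.congr_deriv ?_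
  push_cast
  field_simp
  ring

theorem pow_mul_neg_log_nonneg (k : ℕ) {x : ℝ} (hx : x ∈ Ioo 0 1) : 0 ≤ x ^ k * -log x :=
  mul_nonneg (pow_nonneg hx.1.le k) (neg_nonneg.2 (log_nonpos hx.1.le hx.2.le))

theorem intervalIntegrable_pow_mul_neg_log (k : ℕ) :
    IntervalIntegrable (fun x => x ^ k * -log x) volume 0 1 := by
  rw [intervalIntegrable_iff_integrableOn_Ioc_of_le zero_le_one]
  exact intervalIntegral.integrableOn_deriv_of_nonneg
    (continuous_pow_mul_neg_log_primitive k).continuousOn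
    (fun x hx => hasDerivAt_pow_mul_neg_log_primitive k hx.1.ne')
    (fun x hx => pow_mul_neg_log_nonneg k hx)

theorem integral_pow_mul_neg_log (k : ℕ) :
    ∫ x in Ioo 0 1, x ^ k * -log x = 1 / ((k + 1 : ℕ) : ℝ) ^ 2 := by
  rw [← integral_Ioc_eq_integral_Ioo, ← intervalIntegral.integral_of_le zero_le_one,
    intervalIntegral.integral_eq_sub_of_hasDerivAt_of_le zero_le_one
      (continuous_pow_mul_neg_log_primitive k).continuousOn
      (fun x hx => hasDerivAt_pow_mul_neg_log_primitive k hx.1.ne')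
      (intervalIntegrable_pow_mul_neg_log k)]
  simp

theorem hasSum_one_div_odd_sq :
    HasSum (fun n : ℕ => 1 / ((2 * n + 1 : ℕ) : ℝ) ^ 2) (π ^ 2 / 8) := by
  have hinj : Function.Injective (fun n : ℕ => 2 * n + 1) := fun a b h => by simpa using h
  obtain ⟨s, hodd⟩ : Summable (fun n : ℕ => 1 / ((2 * n + 1 : ℕ) : ℝ) ^ 2) :=
    hasSum_zeta_two.summable.comp_injective hinj
  have heven : HasSum (fun n : ℕ => 1 / ((2 * n : ℕ) : ℝ) ^ 2) (1 / 4 * (π ^ 2 / 6)) := by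
    refine (hasSum_zeta_two.mul_left (1 / 4)).congr_fun fun n => ?_
    push_cast
    ring
  have htotal : 1 / 4 * (π ^ 2 / 6) + s = π ^ 2 / 6 :=
    (heven.even_add_odd (f := fun n : ℕ => 1 / (n : ℝ) ^ 2) hodd).unique hasSum_zeta_two
  rwa [show s = π ^ 2 / 8 by linarith] at hodd

theorem integral_neg_log_div_one_sub_sq :
    ∫ z in Ioo 0 1, -log z / (1 - z ^ 2) = π ^ 2 / 8 := by
  set F : ℕ → ℝ → ℝ := fun n z => z ^ (2 * n) * -log z
  have hint : ∀ n, Integrable (F n) (volume.restrict (Ioo 0 1)) := fun n =>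
    ((intervalIntegrable_pow_mul_neg_log (2 * n)).def'.mono_set (by simp [Ioo_subset_Ioc_self]))
  have hval : ∀ n, ∫ z in Ioo 0 1, F n z = 1 / ((2 * n + 1 : ℕ) : ℝ) ^ 2 :=
    fun n => integral_pow_mul_neg_log (2 * n)
  have hnorm : ∀ n, ∫ z in Ioo 0 1, ‖F n z‖ = 1 / ((2 * n + 1 : ℕ) : ℝ) ^ 2 := fun n => by
    rw [← hval, setIntegral_congr_fun measurableSet_Ioo
      fun z hz => Real.norm_of_nonneg (pow_mul_neg_log_nonneg (2 * n) hz)]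
  have hgeom : ∀ z ∈ Ioo (0 : ℝ) 1, ∑' n, F n z = -log z / (1 - z ^ 2) := by
    intro z hz
    have hz2 : z ^ 2 < 1 := pow_lt_one₀ hz.1.le hz.2 two_ne_zero
    simp only [F, pow_mul, tsum_mul_right, tsum_geometric_of_lt_one (by positivity) hz2]
    ring
  rw [← setIntegral_congr_fun measurableSet_Ioo hgeom]
  refine (hasSum_integral_of_summable_integral_norm hint ?_).unique ?_
  · exact funext hnorm ▸ hasSum_one_div_odd_sq.summable
  · exact funext hval ▸ hasSum_one_div_odd_sq

/-- For `ψ(ξ) = ξ^(α/2)` with `α ∈ (0,2)` and `λ > 0`, the phase shift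
`ϑ_λ = (1/π)∫₀¹ (1/(1-z²)) log[ψ_λ(λ²/z²)/ψ_λ(λ²z²)] dz` equals `(2-α)π/8`,
where `ψ_λ(ξ) = (1 - ξ/λ²)/(1 - ψ(ξ)/ψ(λ²))`. -/
theorem stable_phase_shift (α lam : ℝ) (hα : α ∈ Set.Ioo (0 : ℝ) 2) (hlam : 0 < lam) :
    (1 / Real.pi) * ∫ z in Set.Ioo (0 : ℝ) 1,
      (1 / (1 - z ^ 2)) * Real.log
        (((1 - (lam ^ 2 / z ^ 2) / lam ^ 2) /
            (1 - Real.rpow (lam ^ 2 / z ^ 2) (α / 2) / Real.rpow (lam ^ 2) (α / 2))) /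
         ((1 - (lam ^ 2 * z ^ 2) / lam ^ 2) /
            (1 - Real.rpow (lam ^ 2 * z ^ 2) (α / 2) / Real.rpow (lam ^ 2) (α / 2))))
      = (2 - α) * Real.pi / 8 := by
  change (1 / π) * ∫ z in Ioo 0 1, 1 / (1 - z ^ 2) *
      log (psiLam α lam (lam ^ 2 / z ^ 2) / psiLam α lam (lam ^ 2 * z ^ 2)) = _
  have hintegrand : ∀ z ∈ Ioo (0 : ℝ) 1, 1 / (1 - z ^ 2) *
      log (psiLam α lam (lam ^ 2 / z ^ 2) / psiLam α lam (lam ^ 2 * z ^ 2)) =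
        (2 - α) * (-log z / (1 - z ^ 2)) := fun z hz => by
    rw [log_psiLam_div_psiLam hα.1 hlam.ne' hz]
    ring
  rw [setIntegral_congr_fun measurableSet_Ioo hintegrand, integral_const_mul,
    integral_neg_log_div_one_sub_sq]
  field_simp
end
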